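/- Let φ₀ be a C¹ diffeomorphism of an open set U ⊂ ℝ² into ℝ² with everywhere positive Jacobian, and suppose U contains a horizontal segment at height y_a. Define σ(x,y) as the solution of ∂_y σ(x,y) = det Dφ₀⁻¹(x, σ(x,y)) with σ(x, y_a) = y_a, and set φ(x,y) = φ₀(x, σ(x,y)). Then det Dφ ≡ 1, i.e., φ is area-preserving. -/

import Mathlib

/-!
By the chain rule, `Dφ = Dφ₀ ∘ D(x, σ)`, and `(x, y) ↦ (x, σ(x, y))` has a lower triangular
Jacobian matrix whose determinant is `∂_y σ`. The ODE makes `∂_y σ` the reciprocal of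
`det Dφ₀`, so the two determinants cancel.
-/

theorem LinearMap.det_fst_prod {R : Type*} [CommRing R] (L : R × R →ₗ[R] R) :
    LinearMap.det ((LinearMap.fst R R R).prod L) = L (0, 1) := by
  rw [← LinearMap.det_toMatrix (Module.Basis.finTwoProd R), Matrix.det_fin_two]
  simp [LinearMap.toMatrix_apply]

theorem HasFDerivAt.hasDerivAt_comp_prodMk_right {𝕜 E F : Type*} [NontriviallyNormedField 𝕜]
    [NormedAddCommGroup E] [NormedSpace 𝕜 E] [NormedAddCommGroup F] [NormedSpace 𝕜 F]
    {f : E × 𝕜 → F} {L : E × 𝕜 →L[𝕜] F} {x : E} {y : 𝕜} (hf : HasFDerivAt f L (x, y)) :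
    HasDerivAt (fun t => f (x, t)) (L (0, 1)) y :=
  hf.comp_hasDerivAt y ((hasDerivAt_const y x).prodMk (hasDerivAt_id y))

theorem det_fderiv_comp_fst_prodMk {f : ℝ × ℝ → ℝ × ℝ} {σ : ℝ × ℝ → ℝ} {p : ℝ × ℝ}
    (hf : DifferentiableAt ℝ f (p.1, σ p)) (hσ : DifferentiableAt ℝ σ p) :
    LinearMap.det (fderiv ℝ (fun q : ℝ × ℝ => f (q.1, σ q)) p : (ℝ × ℝ) →ₗ[ℝ] (ℝ × ℝ)) =
      LinearMap.det (fderiv ℝ f (p.1, σ p) : (ℝ × ℝ) →ₗ[ℝ] (ℝ × ℝ)) *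
        deriv (fun y => σ (p.1, y)) p.2 := by
  have hchain : HasFDerivAt (fun q : ℝ × ℝ => f (q.1, σ q)) _ p :=
    hf.hasFDerivAt.comp p (hasFDerivAt_fst.prodMk hσ.hasFDerivAt)
  rw [hchain.fderiv, ContinuousLinearMap.toLinearMap_comp, LinearMap.det_comp,
    ContinuousLinearMap.coe_prod, ContinuousLinearMap.coe_fst, LinearMap.det_fst_prod,
    hσ.hasFDerivAt.hasDerivAt_comp_prodMk_right.deriv]
  rfl

theorem stmt18_general (U : Set (ℝ × ℝ)) (hU : IsOpen U)
    (φ₀ : ℝ × ℝ → ℝ × ℝ) (hφ₀ : DifferentiableOn ℝ φ₀ U)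
    (hdet : ∀ p ∈ U, 0 < LinearMap.det ((fderiv ℝ φ₀ p) : (ℝ × ℝ) →ₗ[ℝ] (ℝ × ℝ)))
    (σ : ℝ × ℝ → ℝ) (hσ : Differentiable ℝ σ)
    (hσy : ∀ p : ℝ × ℝ, (p.1, σ p) ∈ U →
      deriv (fun y => σ (p.1, y)) p.2
        = (LinearMap.det ((fderiv ℝ φ₀ (p.1, σ p)) : (ℝ × ℝ) →ₗ[ℝ] (ℝ × ℝ)))⁻¹) :
    ∀ p : ℝ × ℝ, (p.1, σ p) ∈ U →
      LinearMap.det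
        ((fderiv ℝ (fun q : ℝ × ℝ => φ₀ (q.1, σ q)) p) : (ℝ × ℝ) →ₗ[ℝ] (ℝ × ℝ)) = 1 := by
  intro p hp
  rw [det_fderiv_comp_fst_prodMk (hφ₀.differentiableAt (hU.mem_nhds hp)) (hσ p), hσy p hp,
    mul_inv_cancel₀ (hdet _ hp).ne']

/-- Let `φ₀` be a `C¹` diffeomorphism of an open set `U ⊂ ℝ²` with everywhere positive
Jacobian, and let `σ` solve `∂_y σ(x,y) = (det Dφ₀(x, σ(x,y)))⁻¹` with `σ(x, y_a) = y_a`.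
Then `φ(x,y) = φ₀(x, σ(x,y))` has Jacobian determinant identically `1`. -/
theorem stmt18 (U : Set (ℝ × ℝ)) (hU : IsOpen U)
    (φ₀ : ℝ × ℝ → ℝ × ℝ) (hφ₀ : DifferentiableOn ℝ φ₀ U)
    (hdet : ∀ p ∈ U, 0 < LinearMap.det ((fderiv ℝ φ₀ p) : (ℝ × ℝ) →ₗ[ℝ] (ℝ × ℝ)))
    (ya : ℝ) (σ : ℝ × ℝ → ℝ) (hσ : Differentiable ℝ σ)
    (hσ0 : ∀ x : ℝ, σ (x, ya) = ya)
    (hσy : ∀ p : ℝ × ℝ, (p.1, σ p) ∈ U →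
      deriv (fun y => σ (p.1, y)) p.2
        = (LinearMap.det ((fderiv ℝ φ₀ (p.1, σ p)) : (ℝ × ℝ) →ₗ[ℝ] (ℝ × ℝ)))⁻¹) :
    ∀ p : ℝ × ℝ, (p.1, σ p) ∈ U →
      LinearMap.det
        ((fderiv ℝ (fun q : ℝ × ℝ => φ₀ (q.1, σ q)) p) : (ℝ × ℝ) →ₗ[ℝ] (ℝ × ℝ)) = 1 :=
  stmt18_general U hU φ₀ hφ₀ hdet σ hσ hσy
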